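/- Let Φ and h be as in the canonical construction and set d = 1 + rλ + sλ′. Then in any clause minimum prime pure Horn CNF representation of h, every clause whose variable set contains some v(j), j ∈ [t], has the form v(j) → u(ℓ) for some label ℓ ∈ L ∪ L′. -/

import Mathlib

open Finset

/-- A clause, given by its (fin)sets of positive and negative variables. -/
structure Clause (V : Type*) where
  pos : Finset V
  neg : Finset V
deriving DecidableEq

namespace Clause

variable {V : Type*}

/-- A genuine clause: no variable occurs both positively and negatively. -/
def IsClause (C : Clause V) : Prop := Disjoint C.pos C.neg

/-- Evaluation of a clause (as a disjunction of literals) under an assignment. -/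
def eval (C : Clause V) (a : V → Bool) : Prop :=
  (∃ v ∈ C.pos, a v = true) ∨ (∃ v ∈ C.neg, a v = false)

/-- A pure (definite) Horn clause: exactly one positive literal, its head. -/
def IsPureHorn (C : Clause V) : Prop := ∃ v, C.pos = {v}

end Clause

variable {V : Type*}

/-- Conjunction (as a predicate on assignments) of a set of clauses. -/
def evalSet (S : Set (Clause V)) (a : V → Bool) : Prop := ∀ C ∈ S, C.eval a

/-- Conjunction of the clauses of a CNF, i.e. of a finite set of clauses. -/
def evalCNF (Φ : Finset (Clause V)) (a : V → Bool) : Prop := ∀ C ∈ Φ, C.eval a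

/-- A CNF represents a Boolean function `h`. -/
def Represents (Φ : Finset (Clause V)) (h : (V → Bool) → Prop) : Prop :=
  ∀ a, evalCNF Φ a ↔ h a

/-- A pure Horn CNF: all clauses are pure Horn. -/
def IsPureHornCNF (Φ : Finset (Clause V)) : Prop :=
  ∀ C ∈ Φ, C.IsClause ∧ C.IsPureHorn

/-- The forward chaining closure of a set `Q` of variables with respect to the
pure Horn CNF `Φ`: the smallest set containing `Q` such that whenever `Φ` contains
a clause `S → v` with `S` inside the set, also `v` belongs to it. -/
def fcClosure (Φ : Finset (Clause V)) (Q : Set V) : Set V :=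
  ⋂₀ {T : Set V | Q ⊆ T ∧ ∀ C ∈ Φ, ∀ v : V, C.pos = {v} → ↑C.neg ⊆ T → v ∈ T}

/-- `C` is an implicate of `h`: every assignment falsifying `C` falsifies `h`. -/
def Implicate (h : (V → Bool) → Prop) (C : Clause V) : Prop :=
  ∀ a, ¬ C.eval a → ¬ h a

/-- `C` is a prime implicate of `h`: an implicate from which no literal can be
deleted while remaining an implicate. -/
def PrimeImplicate [DecidableEq V] (h : (V → Bool) → Prop) (C : Clause V) : Prop :=
  C.IsClause ∧ Implicate h C ∧
  (∀ v ∈ C.pos, ¬ Implicate h ⟨C.pos.erase v, C.neg⟩) ∧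
  (∀ v ∈ C.neg, ¬ Implicate h ⟨C.pos, C.neg.erase v⟩)

/-- `C₁` and `C₂` are resolvable on `v`: `v` occurs positively in `C₁`, negatively in
`C₂`, and no other variable occurs with opposite signs in them. -/
def Resolvable (C₁ C₂ : Clause V) (v : V) : Prop :=
  v ∈ C₁.pos ∧ v ∈ C₂.neg ∧
  ∀ w, w ≠ v → ¬(w ∈ C₁.pos ∧ w ∈ C₂.neg) ∧ ¬(w ∈ C₁.neg ∧ w ∈ C₂.pos)

/-- The resolvent `R(C₁,C₂) = (C₁ \ {v}) ∪ (C₂ \ {v̄})`. -/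
def resolventOf [DecidableEq V] (C₁ C₂ : Clause V) (v : V) : Clause V :=
  ⟨C₁.pos.erase v ∪ C₂.pos, C₁.neg ∪ C₂.neg.erase v⟩

/-- A set of clauses closed under resolution. -/
def ResClosed [DecidableEq V] (S : Set (Clause V)) : Prop :=
  ∀ C₁ ∈ S, ∀ C₂ ∈ S, ∀ v, Resolvable C₁ C₂ v → resolventOf C₁ C₂ v ∈ S

/-- The resolution closure of a set of clauses. -/
def resClosure [DecidableEq V] (S : Set (Clause V)) : Set (Clause V) :=
  ⋂₀ {T : Set (Clause V) | S ⊆ T ∧ ResClosed T}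

/-- `I(h)`: the resolution closure of the set of prime implicates of `h`. -/
def implSet [DecidableEq V] (h : (V → Bool) → Prop) : Set (Clause V) :=
  resClosure {C | PrimeImplicate h C}

/-- An exclusive set of clauses of `h`. -/
def ExclusiveSet [DecidableEq V] (h : (V → Bool) → Prop) (Xs : Set (Clause V)) : Prop :=
  Xs ⊆ implSet h ∧
  ∀ C₁ ∈ implSet h, ∀ C₂ ∈ implSet h, ∀ v, Resolvable C₁ C₂ v →
    resolventOf C₁ C₂ v ∈ Xs → C₁ ∈ Xs ∧ C₂ ∈ Xs

/-- The set of variables occurring in a CNF. -/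
def varsOf [DecidableEq V] (Φ : Finset (Clause V)) : Finset V :=
  Φ.biUnion fun C => C.pos ∪ C.neg


/-- A Label Cover instance: a bipartite graph with parts `X` and `Y` and edge set `E`,
label sets `A` (for `X`-vertices) and `B` (for `Y`-vertices), and a nonempty
constraint relation `cst e ⊆ A × B` for every edge `e ∈ E`. -/
structure LabelCover (X Y A B : Type*) where
  E : Finset (X × Y)
  cst : X × Y → Finset (A × B)
  cst_nonempty : ∀ e ∈ E, (cst e).Nonempty

namespace LabelCover

variable {X Y A B : Type*}

/-- A labeling `(f, g)` covers an edge `(x,y)` if for every label `b ∈ g y` there is a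
label `a ∈ f x` with `(a, b)` admissible for the edge. -/
def Covers (I : LabelCover X Y A B) (f : X → Finset A) (g : Y → Finset B)
    (e : X × Y) : Prop :=
  ∀ b ∈ g e.2, ∃ a ∈ f e.1, (a, b) ∈ I.cst e

/-- A total-cover: a labeling (assigning a nonempty label set to every `Y`-vertex)
covering every edge. -/
def IsTotalCover (I : LabelCover X Y A B) (f : X → Finset A) (g : Y → Finset B) : Prop :=
  (∀ y, (g y).Nonempty) ∧ ∀ e ∈ I.E, I.Covers f g e

/-- A total-cover is tight if every `Y`-vertex receives exactly one label. -/
def Tight (g : Y → Finset B) : Prop := ∀ y, (g y).card = 1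

end LabelCover

/-- The cost of a labeling: the average number of labels assigned to `X`-vertices. -/
def lcCost {X A : Type*} [Fintype X] (f : X → Finset A) : ℚ :=
  (∑ x, ((f x).card : ℚ)) / (Fintype.card X : ℚ)


/-- The labels of the refined Label Cover instance: `L ∪ L′`, where `L = ⋃_x L_x`
with `L_x = {x} × A` and `L′ = ⋃_y L′_y` with `L′_y = {y} × B`. -/
abbrev Lab (X Y A B : Type*) := (X × A) ⊕ (Y × B)

/-- The propositional variables of the canonical pure Horn CNF construction:
`u ℓ` for labels `ℓ ∈ L ∪ L′`, `e x y i` and `el x y ℓ′ i` for edges `(x,y)`,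
labels `ℓ′ ∈ L′_y` and indices `i ∈ [d]`, and `v j` for `j ∈ [t]`. -/
inductive PV (X Y A B : Type*) where
  | u : Lab X Y A B → PV X Y A B
  | e : X → Y → ℕ → PV X Y A B
  | el : X → Y → B → ℕ → PV X Y A B
  | v : ℕ → PV X Y A B
deriving DecidableEq

section Canonical

variable {X Y A B : Type*} [Fintype X] [Fintype Y] [Fintype A] [Fintype B]
  [DecidableEq X] [DecidableEq Y] [DecidableEq A] [DecidableEq B]

/-- The (open) neighborhood `N(y) = {z ∈ X : (z,y) ∈ E}`. -/
def Nbr (I : LabelCover X Y A B) (y : Y) : Finset X :=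
  Finset.univ.filter fun z => (z, y) ∈ I.E

/-- Clauses (a): `u(ℓ) ∧ u(ℓ′) → e(x,y,ℓ′,i)` for `(x,y) ∈ E`, `(ℓ,ℓ′) ∈ Π_{(x,y)}`,
`i ∈ [d]`. -/
def clA (I : LabelCover X Y A B) (d : ℕ) : Finset (Clause (PV X Y A B)) :=
  (I.E ×ˢ Finset.Icc 1 d).biUnion fun p =>
    (I.cst p.1).image fun ab =>
      ⟨{PV.el p.1.1 p.1.2 ab.2 p.2},
       {PV.u (Sum.inl (p.1.1, ab.1)), PV.u (Sum.inr (p.1.2, ab.2))}⟩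

/-- Clauses (b): `⋀_{z ∈ N(y)} e(z,y,ℓ′,i) → e(x,y,i)` for `(x,y) ∈ E`, `ℓ′ ∈ L′_y`,
`i ∈ [d]`. -/
def clB (I : LabelCover X Y A B) (d : ℕ) : Finset (Clause (PV X Y A B)) :=
  ((I.E ×ˢ (Finset.univ : Finset B)) ×ˢ Finset.Icc 1 d).image fun p =>
    ⟨{PV.e p.1.1.1 p.1.1.2 p.2},
     (Nbr I p.1.1.2).image fun z => PV.el z p.1.1.2 p.1.2 p.2⟩

/-- Clauses (c): `e(x,y,i) → e(x,y,ℓ′,i)` for `(x,y) ∈ E`, `ℓ′ ∈ L′_y`, `i ∈ [d]`. -/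
def clC (I : LabelCover X Y A B) (d : ℕ) : Finset (Clause (PV X Y A B)) :=
  ((I.E ×ˢ (Finset.univ : Finset B)) ×ˢ Finset.Icc 1 d).image fun p =>
    ⟨{PV.el p.1.1.1 p.1.1.2 p.1.2 p.2}, {PV.e p.1.1.1 p.1.1.2 p.2}⟩

/-- The common body of the clauses (d): all variables `e(x,y,i)`, `(x,y) ∈ E`, `i ∈ [d]`. -/
def bigBody (I : LabelCover X Y A B) (d : ℕ) : Finset (PV X Y A B) :=
  (I.E ×ˢ Finset.Icc 1 d).image fun p => PV.e p.1.1 p.1.2 p.2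

/-- Clauses (d): `⋀_{i ∈ [d]} ⋀_{(x,y) ∈ E} e(x,y,i) → u(ℓ)` for `ℓ ∈ L ∪ L′`. -/
def clD (I : LabelCover X Y A B) (d : ℕ) : Finset (Clause (PV X Y A B)) :=
  (Finset.univ : Finset (Lab X Y A B)).image fun ℓ => ⟨{PV.u ℓ}, bigBody I d⟩

/-- Clauses (e): `v(j) → u(ℓ)` for `j ∈ [t]`, `ℓ ∈ L ∪ L′`. -/
def clE (X Y A B : Type*) [Fintype X] [Fintype Y] [Fintype A] [Fintype B]
    [DecidableEq X] [DecidableEq Y] [DecidableEq A] [DecidableEq B]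
    (t : ℕ) : Finset (Clause (PV X Y A B)) :=
  (Finset.Icc 1 t ×ˢ (Finset.univ : Finset (Lab X Y A B))).image fun p =>
    ⟨{PV.u p.2}, {PV.v p.1}⟩

/-- The canonical formula `Ψ`: clauses of types (a)–(d). -/
def PsiCNF (I : LabelCover X Y A B) (d : ℕ) : Finset (Clause (PV X Y A B)) :=
  clA I d ∪ clB I d ∪ clC I d ∪ clD I d

/-- The canonical formula `Φ`: clauses of types (a)–(e). -/
def PhiCNF (I : LabelCover X Y A B) (d t : ℕ) : Finset (Clause (PV X Y A B)) :=
  PsiCNF I d ∪ clE X Y A B t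

/-- The pure Horn function `h` represented by the canonical formula `Φ`. -/
def hFun (I : LabelCover X Y A B) (d t : ℕ) : (PV X Y A B → Bool) → Prop :=
  fun a => evalCNF (PhiCNF I d t) a

/-- The pure Horn function `g` represented by the canonical formula `Ψ`. -/
def gFun (I : LabelCover X Y A B) (d : ℕ) : (PV X Y A B → Bool) → Prop :=
  fun a => evalCNF (PsiCNF I d) a

end Canonical

/-!
Primality, together with the clauses (e), forces every clause of `Υ` that mentions some `v(j)` to
be `v(j) → w` for a head `w` of `Φ`. If the labels `U` support a cover of every edge, then from
`Ψ` and `u(U)` every head of `Φ` follows, so the `v(j)`-clauses of `Υ` can be replaced by the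
clauses `v(j) → u(ℓ)`, `ℓ ∈ U`; minimality bounds their number by `|U|`. With `U = L ∪ L′` there
are fewer than `d` of them, so some index `i₀ ∈ [d]` occurs in none of their heads. Setting to
false exactly what is not derivable at index `i₀` then shows that the labels of the clauses
`v(j) → u(ℓ)` already in `Υ` support a cover, and minimality with this `U` leaves no room for any
other `v(j)`-clause.
-/

namespace Clause

variable {V : Type*}

theorem eval_pureHorn_iff {w : V} {N : Finset V} {a : V → Bool} :
    (⟨{w}, N⟩ : Clause V).eval a ↔ ((∀ n ∈ N, a n = true) → a w = true) := by
  simp only [eval, mem_singleton, exists_eq_left]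
  by_cases hw : a w = true <;> simp [hw]

theorem eval_congr [DecidableEq V] {C : Clause V} {a b : V → Bool}
    (h : ∀ p ∈ C.pos ∪ C.neg, a p = b p) : C.eval a ↔ C.eval b := by
  simp only [mem_union] at h
  simp only [eval]
  constructor <;> rintro (⟨p, hp, hap⟩ | ⟨p, hp, hap⟩)
  exacts [.inl ⟨p, hp, h p (.inl hp) ▸ hap⟩, .inr ⟨p, hp, h p (.inr hp) ▸ hap⟩,
    .inl ⟨p, hp, (h p (.inl hp)).symm ▸ hap⟩, .inr ⟨p, hp, (h p (.inr hp)).symm ▸ hap⟩]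

end Clause

theorem evalCNF_union {V : Type*} [DecidableEq V] {Φ Ψ : Finset (Clause V)} {a : V → Bool} :
    evalCNF (Φ ∪ Ψ) a ↔ evalCNF Φ a ∧ evalCNF Ψ a := by
  simp only [evalCNF, mem_union, or_imp, forall_and]

section Implicates

variable {V : Type*}

def IsClauseMinimum (h : (V → Bool) → Prop) (Υ : Finset (Clause V)) : Prop :=
  ∀ Υ' : Finset (Clause V), IsPureHornCNF Υ' → Represents Υ' h → Υ.card ≤ Υ'.card

variable {h : (V → Bool) → Prop}

theorem Implicate.mono {C C' : Clause V} (hC : Implicate h C) (hpos : C.pos ⊆ C'.pos)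
    (hneg : C.neg ⊆ C'.neg) : Implicate h C' := by
  rintro a hC' ha
  refine hC a (fun hCa => hC' ?_) ha
  rcases hCa with ⟨p, hp, hap⟩ | ⟨p, hp, hap⟩
  exacts [.inl ⟨p, hpos hp, hap⟩, .inr ⟨p, hneg hp, hap⟩]

variable [DecidableEq V] {C : Clause V}

theorem PrimeImplicate.not_apply_of_pos_eq {p : V} (hC : PrimeImplicate h C)
    (hp : C.pos = {p}) : ¬ h (fun q => decide (q ≠ p)) := by
  refine hC.2.1 _ ?_
  have hpneg : p ∉ C.neg := Finset.disjoint_left.1 hC.1 (hp ▸ mem_singleton_self p)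
  rintro (⟨q, hq, hq'⟩ | ⟨q, hq, hq'⟩)
  · simp_all
  · simp only [decide_eq_false_iff_not, not_not] at hq'
    exact hpneg (hq' ▸ hq)

theorem PrimeImplicate.neg_eq_singleton {q : V} (hC : PrimeImplicate h C) (hq : q ∈ C.neg)
    (hqC : Implicate h ⟨C.pos, {q}⟩) : C.neg = {q} := by
  refine Subset.antisymm (fun n hn => mem_singleton.2 ?_) (singleton_subset_iff.2 hq)
  by_contra hnq
  exact hC.2.2.2 n hn <| hqC.mono subset_rfl <|
    singleton_subset_iff.2 (mem_erase.2 ⟨Ne.symm hnq, hq⟩)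

theorem PrimeImplicate.not_mem_neg_of_update {q : V} (hC : PrimeImplicate h C)
    (hq : ∀ a, h a → h (Function.update a q true)) : q ∉ C.neg := by
  intro hqC
  obtain ⟨a, hCa, ha⟩ : ∃ a, ¬ Clause.eval ⟨C.pos, C.neg.erase q⟩ a ∧ h a := by
    simpa [Implicate] using hC.2.2.2 q hqC
  have hqpos : q ∉ C.pos := Finset.disjoint_right.1 hC.1 hqC
  refine hC.2.1 _ (fun hC' => hCa ?_) (hq a ha)
  rcases hC' with ⟨p, hp, hap⟩ | ⟨p, hp, hap⟩
  · exact .inl ⟨p, hp, by rwa [Function.update_of_ne (ne_of_mem_of_not_mem hp hqpos)] at hap⟩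
  · by_cases hpq : p = q
    · simp [hpq] at hap
    · exact .inr ⟨p, mem_erase.2 ⟨hpq, hp⟩, by rwa [Function.update_of_ne hpq] at hap⟩

theorem IsClauseMinimum.card_le_of_represents_sdiff_union {Υ S T : Finset (Clause V)}
    (hmin : IsClauseMinimum h Υ) (hS : S ⊆ Υ) (hPH : IsPureHornCNF (Υ \ S ∪ T))
    (hrep : Represents (Υ \ S ∪ T) h) : S.card ≤ T.card := by
  have := hmin _ hPH hrep
  have := card_union_le (Υ \ S) T
  have := card_sdiff_of_subset hS
  have := card_le_card hS
  omega

end Implicates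

theorem exists_mem_Icc_forall_pos_ne {V : Type*} {S : Finset (Clause V)}
    (hS : ∀ C ∈ S, C.IsPureHorn) (f : V → ℕ) {d : ℕ} (hd : S.card < d) :
    ∃ i ∈ Icc 1 d, ∀ C ∈ S, ∀ w ∈ C.pos, f w ≠ i := by
  have hcard : (S.biUnion fun C => C.pos.image f).card < (Icc 1 d).card :=
    calc (S.biUnion fun C => C.pos.image f).card
        ≤ ∑ C ∈ S, (C.pos.image f).card := card_biUnion_le
      _ ≤ ∑ C ∈ S, 1 := sum_le_sum fun C hC => by
          obtain ⟨w, hw⟩ := hS C hC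
          simp [hw]
      _ < (Icc 1 d).card := by simpa using hd
  obtain ⟨i, hi, hnot⟩ := exists_mem_notMem_of_card_lt_card hcard
  exact ⟨i, hi, fun C hC w hw hwi => hnot (mem_biUnion.2 ⟨C, hC, mem_image.2 ⟨w, hw, hwi⟩⟩)⟩

section LabelSupport

variable {X Y A B : Type*} [Fintype X] [DecidableEq X] [DecidableEq Y] {I : LabelCover X Y A B}

theorem mem_Nbr {y : Y} {z : X} : z ∈ Nbr I y ↔ (z, y) ∈ I.E := by
  simp [Nbr]

variable (I)

def LabelCover.CoversAt (U : Finset (Lab X Y A B)) (y : Y) : Prop :=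
  ∃ b, .inr (y, b) ∈ U ∧ ∀ z ∈ Nbr I y, ∃ a, .inl (z, a) ∈ U ∧ (a, b) ∈ I.cst (z, y)

def LabelCover.CoversAll (U : Finset (Lab X Y A B)) : Prop :=
  ∀ e ∈ I.E, I.CoversAt U e.2

variable {I}

theorem LabelCover.coversAll_univ [Fintype Y] [Fintype A] [Fintype B] {f : X → Finset A}
    {g : Y → Finset B} (hfg : I.IsTotalCover f g) : I.CoversAll univ := by
  intro e _
  obtain ⟨b, hb⟩ := hfg.1 e.2
  refine ⟨b, mem_univ _, fun z hz => ?_⟩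
  obtain ⟨a, -, hab⟩ := hfg.2 (z, e.2) (mem_Nbr.1 hz) b hb
  exact ⟨a, mem_univ _, hab⟩

end LabelSupport

section PropositionalVariables

variable {X Y A B : Type*}

def IsPhiHead (I : LabelCover X Y A B) (d : ℕ) : PV X Y A B → Prop
  | .u _ => True
  | .e x y i | .el x y _ i => (x, y) ∈ I.E ∧ i ∈ Icc 1 d
  | .v _ => False

def PV.index : PV X Y A B → ℕ
  | .e _ _ i | .el _ _ _ i => i
  | _ => 0

def PV.clearV (c : PV X Y A B → Bool) : PV X Y A B → Bool
  | .v _ => false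
  | q => c q

theorem PV.clearV_of_ne {c : PV X Y A B → Bool} {q : PV X Y A B} (hq : ∀ k, q ≠ .v k) :
    clearV c q = c q := by
  cases q <;> simp_all [clearV]

def clauseE (j : ℕ) (ℓ : Lab X Y A B) : Clause (PV X Y A B) := ⟨{.u ℓ}, {.v j}⟩

theorem clauseE_injective (j : ℕ) :
    Function.Injective (clauseE j : Lab X Y A B → Clause (PV X Y A B)) :=
  fun ℓ ℓ' h => by simpa [clauseE] using h

end PropositionalVariables

section CanonicalFormula

variable {X Y A B : Type*} [Fintype X] [Fintype Y] [Fintype A] [Fintype B]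
  [DecidableEq X] [DecidableEq Y] [DecidableEq A] [DecidableEq B]
  (I : LabelCover X Y A B) (d t : ℕ)

theorem gFun_iff (c : PV X Y A B → Bool) : gFun I d c ↔
    (∀ x y i, (x, y) ∈ I.E → i ∈ Icc 1 d → ∀ a b, (a, b) ∈ I.cst (x, y) →
      c (.u (.inl (x, a))) = true → c (.u (.inr (y, b))) = true → c (.el x y b i) = true) ∧
    (∀ x y b i, (x, y) ∈ I.E → i ∈ Icc 1 d →
      (∀ z ∈ Nbr I y, c (.el z y b i) = true) → c (.e x y i) = true) ∧
    (∀ x y b i, (x, y) ∈ I.E → i ∈ Icc 1 d → c (.e x y i) = true → c (.el x y b i) = true) ∧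
    ∀ ℓ, (∀ x y i, (x, y) ∈ I.E → i ∈ Icc 1 d → c (.e x y i) = true) → c (.u ℓ) = true := by
  simp only [gFun, evalCNF, PsiCNF, clA, clB, clC, clD, bigBody, mem_union, or_imp, forall_and,
    mem_biUnion, forall_exists_index, and_imp, forall_mem_image, Prod.forall, mem_product, mem_univ,
    and_true, true_implies, forall_comm (α := Clause (PV X Y A B)), Clause.eval_pureHorn_iff,
    mem_singleton, forall_eq, mem_insert, and_assoc]

theorem hFun_iff (c : PV X Y A B → Bool) : hFun I d t c ↔
    gFun I d c ∧ ∀ j ℓ, j ∈ Icc 1 t → c (.v j) = true → c (.u ℓ) = true := by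
  rw [hFun, PhiCNF, evalCNF_union, gFun]
  refine and_congr Iff.rfl ?_
  simp only [evalCNF, clE, forall_mem_image, Prod.forall, mem_product, mem_univ, and_true,
    Clause.eval_pureHorn_iff, mem_singleton, forall_eq]

variable {I d t}

theorem gFun_congr {c c' : PV X Y A B → Bool} (h : ∀ q, (∀ k, q ≠ .v k) → c q = c' q) :
    gFun I d c ↔ gFun I d c' := by
  have hu : ∀ ℓ, c (.u ℓ) = c' (.u ℓ) := fun ℓ => h _ (by simp)
  have he : ∀ x y i, c (.e x y i) = c' (.e x y i) := fun x y i => h _ (by simp)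
  have hel : ∀ x y b i, c (.el x y b i) = c' (.el x y b i) := fun x y b i => h _ (by simp)
  simp only [gFun_iff, hu, he, hel]

theorem gFun.apply_eq_true_of_coversAll {c : PV X Y A B → Bool} (hc : gFun I d c)
    {U : Finset (Lab X Y A B)} (hU : ∀ ℓ ∈ U, c (.u ℓ) = true) (hcov : I.CoversAll U)
    {w : PV X Y A B} (hw : IsPhiHead I d w) : c w = true := by
  obtain ⟨hA, hB, hC, hD⟩ := (gFun_iff I d c).1 hc
  have he : ∀ x y i, (x, y) ∈ I.E → i ∈ Icc 1 d → c (.e x y i) = true := by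
    intro x y i hxy hi
    obtain ⟨b, hb, hsupp⟩ := hcov (x, y) hxy
    refine hB x y b i hxy hi fun z hz => ?_
    obtain ⟨a, ha, hab⟩ := hsupp z hz
    exact hA z y i (mem_Nbr.1 hz) hi a b hab (hU _ ha) (hU _ hb)
  match w, hw with
  | .u ℓ, _ => exact hD ℓ he
  | .e x y i, ⟨hxy, hi⟩ => exact he x y i hxy hi
  | .el x y b i, ⟨hxy, hi⟩ => exact hC x y b i hxy hi (he x y i hxy hi)

theorem hFun_decide_ne_of_not_isPhiHead {p : PV X Y A B} (hp : ¬ IsPhiHead I d p) :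
    hFun I d t (fun q => decide (q ≠ p)) := by
  have hne : ∀ q, IsPhiHead I d q → decide (q ≠ p) = true := fun q hq =>
    decide_eq_true fun h => hp (h ▸ hq)
  refine (hFun_iff I d t _).2 ⟨(gFun_iff I d _).2 ⟨?_, ?_, ?_, ?_⟩, ?_⟩
  · exact fun x y i hxy hi _ _ _ _ _ => hne _ ⟨hxy, hi⟩
  · exact fun x y _ i hxy hi _ => hne _ ⟨hxy, hi⟩
  · exact fun x y _ i hxy hi _ => hne _ ⟨hxy, hi⟩
  · exact fun ℓ _ => hne (.u ℓ) trivial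
  · exact fun _ ℓ _ _ => hne (.u ℓ) trivial

theorem hFun_update_v {k : ℕ} (hk : k ∉ Icc 1 t) {c : PV X Y A B → Bool} (hc : hFun I d t c) :
    hFun I d t (Function.update c (.v k) true) := by
  obtain ⟨hg, hv⟩ := (hFun_iff I d t c).1 hc
  refine (hFun_iff I d t _).2 ⟨(gFun_congr fun q hq => ?_).1 hg, fun j ℓ hj hcj => ?_⟩
  · exact (Function.update_of_ne (hq k) _ _).symm
  · have hjk : (PV.v j : PV X Y A B) ≠ .v k := fun h => hk (PV.v.inj h ▸ hj)
    rw [Function.update_of_ne hjk] at hcj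
    rw [Function.update_of_ne (by simp)]
    exact hv j ℓ hj hcj

theorem implicate_v_imp_of_isPhiHead (hfeas : ∃ f g, I.IsTotalCover f g) {j : ℕ}
    (hj : j ∈ Icc 1 t) {w : PV X Y A B} (hw : IsPhiHead I d w) :
    Implicate (hFun I d t) ⟨{w}, {.v j}⟩ := by
  intro c hwc hc
  obtain ⟨f, g, hfg⟩ := hfeas
  obtain ⟨hg, hv⟩ := (hFun_iff I d t c).1 hc
  refine hwc (Clause.eval_pureHorn_iff.2 fun hcj => ?_)
  exact hg.apply_eq_true_of_coversAll (fun ℓ _ => hv j ℓ hj (hcj _ (mem_singleton_self _)))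
    (LabelCover.coversAll_univ hfg) hw

theorem PrimeImplicate.eq_of_v_mem (hfeas : ∃ f g, I.IsTotalCover f g)
    {C : Clause (PV X Y A B)} (hC : PrimeImplicate (hFun I d t) C) (hH : C.IsPureHorn) {k : ℕ}
    (hk : .v k ∈ C.pos ∪ C.neg) : ∃ w, IsPhiHead I d w ∧ C = ⟨{w}, {.v k}⟩ := by
  obtain ⟨p, hp⟩ := hH
  have hpHead : IsPhiHead I d p := by
    by_contra hpHead
    exact hC.not_apply_of_pos_eq hp (hFun_decide_ne_of_not_isPhiHead hpHead)
  have hkneg : .v k ∈ C.neg := by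
    refine (mem_union.1 hk).resolve_left fun hkpos => ?_
    rw [hp, mem_singleton] at hkpos
    rwa [← hkpos] at hpHead
  have hkt : k ∈ Icc 1 t := by
    by_contra hkt
    exact hC.not_mem_neg_of_update (fun _ => hFun_update_v hkt) hkneg
  have hneg : C.neg = {.v k} :=
    hC.neg_eq_singleton hkneg (hp ▸ implicate_v_imp_of_isPhiHead hfeas hkt hpHead)
  exact ⟨p, hpHead, by rw [← hp, ← hneg]⟩

variable (I) in
/-- The least model of `Ψ` in which `v(j)`, the `u(ℓ)` with `ℓ ∈ U` and all variables of index
other than `i₀` are true. -/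
noncomputable def blockedAssignment (U : Finset (Lab X Y A B)) (i₀ j : ℕ) :
    PV X Y A B → Bool := by
  classical
  exact fun
    | .u ℓ => decide (ℓ ∈ U)
    | .e _ y i => decide (i ≠ i₀ ∨ I.CoversAt U y)
    | .el x y b i => decide (i ≠ i₀ ∨ I.CoversAt U y ∨
        (.inr (y, b) ∈ U ∧ ∃ a, .inl (x, a) ∈ U ∧ (a, b) ∈ I.cst (x, y)))
    | .v m => decide (m = j)

theorem gFun_blockedAssignment {U : Finset (Lab X Y A B)} {i₀ : ℕ} (j : ℕ)
    (hi₀ : i₀ ∈ Icc 1 d) (hU : ¬ I.CoversAll U) : gFun I d (blockedAssignment I U i₀ j) := by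
  refine (gFun_iff I d _).2 ⟨?_, ?_, ?_, ?_⟩ <;> simp only [blockedAssignment, decide_eq_true_iff]
  · exact fun x y i _ _ a b hab ha hb => .inr (.inr ⟨hb, a, ha, hab⟩)
  · intro x y b i hxy _ hz
    refine (em (i = i₀)).elim (fun hii => .inr ?_) .inl
    by_contra hcov
    have hsupp := fun z hzy => ((hz z hzy).resolve_left (not_not.2 hii)).resolve_left hcov
    exact hcov ⟨b, (hsupp x (mem_Nbr.2 hxy)).1, fun z hzy => (hsupp z hzy).2⟩
  · exact fun x y b i _ _ h => h.imp_right .inl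
  · intro ℓ he
    exact (hU fun e he' => (he e.1 e.2 i₀ he' hi₀).resolve_left (not_not.2 rfl)).elim

end CanonicalFormula

section MinimalRepresentation

variable {X Y A B : Type*} [Fintype X] [Fintype Y] [Fintype A] [Fintype B]
  [DecidableEq X] [DecidableEq Y] [DecidableEq A] [DecidableEq B]
  {I : LabelCover X Y A B} {d t : ℕ} {Υ : Finset (Clause (PV X Y A B))}

variable (I d) in
def IsVShaped (Υ : Finset (Clause (PV X Y A B))) : Prop :=
  ∀ C ∈ Υ, ∀ k, .v k ∈ C.pos ∪ C.neg → ∃ w, IsPhiHead I d w ∧ C = ⟨{w}, {.v k}⟩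

variable (Υ) in
def vClauses (j : ℕ) : Finset (Clause (PV X Y A B)) :=
  Υ.filter fun C => .v j ∈ C.pos ∪ C.neg

variable (Υ) in
def vLabels (j : ℕ) : Finset (Lab X Y A B) :=
  univ.filter fun ℓ => clauseE j ℓ ∈ Υ

theorem gFun_iff_forall_vFree (hΥ : IsVShaped I d Υ) (hrep : Represents Υ (hFun I d t))
    (c : PV X Y A B → Bool) :
    gFun I d c ↔ ∀ C ∈ Υ, (∀ k, .v k ∉ C.pos ∪ C.neg) → C.eval c := by
  have hagree : ∀ C : Clause (PV X Y A B), (∀ k, .v k ∉ C.pos ∪ C.neg) →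
      (C.eval (PV.clearV c) ↔ C.eval c) := fun C hC =>
    Clause.eval_congr fun q hq => PV.clearV_of_ne fun k hqk => hC k (hqk ▸ hq)
  calc gFun I d c ↔ gFun I d (PV.clearV c) := gFun_congr fun q hq => (PV.clearV_of_ne hq).symm
    _ ↔ hFun I d t (PV.clearV c) := by simp [hFun_iff, PV.clearV]
    _ ↔ evalCNF Υ (PV.clearV c) := (hrep _).symm
    _ ↔ ∀ C ∈ Υ, (∀ k, .v k ∉ C.pos ∪ C.neg) → C.eval c := by
      refine ⟨fun h C hC hfree => (hagree C hfree).1 (h C hC), fun h C hC => ?_⟩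
      by_cases hfree : ∀ k, .v k ∉ C.pos ∪ C.neg
      · exact (hagree C hfree).2 (h C hC hfree)
      · obtain ⟨k, hk⟩ := not_forall_not.1 hfree
        obtain ⟨w, -, rfl⟩ := hΥ C hC k hk
        exact .inr ⟨.v k, mem_singleton_self _, rfl⟩

theorem represents_replace_vClauses (hΥ : IsVShaped I d Υ) (hrep : Represents Υ (hFun I d t))
    {j : ℕ} (hj : j ∈ Icc 1 t) {U : Finset (Lab X Y A B)} (hU : I.CoversAll U) :
    Represents (Υ \ vClauses Υ j ∪ U.image (clauseE j)) (hFun I d t) := by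
  intro c
  have hE : ∀ ℓ, hFun I d t c → (clauseE j ℓ).eval c := fun ℓ hc =>
    Clause.eval_pureHorn_iff.2 fun hcj =>
      ((hFun_iff I d t c).1 hc).2 j ℓ hj (hcj _ (mem_singleton_self _))
  rw [evalCNF_union, ← hrep]
  refine ⟨fun ⟨hrest, hnew⟩ C hC => ?_, fun hΥc => ⟨fun C hC => hΥc C (mem_sdiff.1 hC).1,
    forall_mem_image.2 fun ℓ _ => hE ℓ ((hrep c).1 hΥc)⟩⟩
  by_cases hCj : C ∈ vClauses Υ j
  · obtain ⟨w, hw, rfl⟩ := hΥ C hC j (mem_filter.1 hCj).2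
    have hg : gFun I d c := (gFun_iff_forall_vFree hΥ hrep c).2 fun C' hC' hfree =>
      hrest C' (mem_sdiff.2 ⟨hC', fun h => hfree j (mem_filter.1 h).2⟩)
    refine Clause.eval_pureHorn_iff.2 fun hcj =>
      hg.apply_eq_true_of_coversAll (fun ℓ hℓ => ?_) hU hw
    exact Clause.eval_pureHorn_iff.1 (hnew _ (mem_image_of_mem _ hℓ)) hcj
  · exact hrest C (mem_sdiff.2 ⟨hC, hCj⟩)

theorem card_vClauses_le (hΥ : IsVShaped I d Υ) (hPH : IsPureHornCNF Υ)
    (hrep : Represents Υ (hFun I d t)) (hmin : IsClauseMinimum (hFun I d t) Υ)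
    {j : ℕ} (hj : j ∈ Icc 1 t) {U : Finset (Lab X Y A B)} (hU : I.CoversAll U) :
    (vClauses Υ j).card ≤ U.card := by
  have hPH' : IsPureHornCNF (Υ \ vClauses Υ j ∪ U.image (clauseE j)) := by
    intro C hC
    rcases mem_union.1 hC with hC | hC
    · exact hPH C (mem_sdiff.1 hC).1
    · obtain ⟨ℓ, -, rfl⟩ := mem_image.1 hC
      exact ⟨by simp [Clause.IsClause, clauseE], _, rfl⟩
  exact (hmin.card_le_of_represents_sdiff_union (filter_subset _ _) hPH'
    (represents_replace_vClauses hΥ hrep hj hU)).trans card_image_le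

theorem card_vClauses_lt (hΥ : IsVShaped I d Υ) (hPH : IsPureHornCNF Υ)
    (hrep : Represents Υ (hFun I d t)) (hmin : IsClauseMinimum (hFun I d t) Υ)
    (hfeas : ∃ f g, I.IsTotalCover f g) {j : ℕ} (hj : j ∈ Icc 1 t)
    (hd : d = 1 + Fintype.card X * Fintype.card A + Fintype.card Y * Fintype.card B) :
    (vClauses Υ j).card < d := by
  obtain ⟨f, g, hfg⟩ := hfeas
  have := card_vClauses_le hΥ hPH hrep hmin hj (LabelCover.coversAll_univ hfg)
  simp only [card_univ, Fintype.card_sum, Fintype.card_prod] at this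
  omega

theorem coversAll_vLabels (hΥ : IsVShaped I d Υ) (hrep : Represents Υ (hFun I d t))
    (hfeas : ∃ f g, I.IsTotalCover f g) {j : ℕ} (hj : j ∈ Icc 1 t)
    (hlt : (vClauses Υ j).card < d) : I.CoversAll (vLabels Υ j) := by
  by_contra hU
  have hHorn : ∀ C ∈ vClauses Υ j, C.IsPureHorn := fun C hC => by
    obtain ⟨w, -, rfl⟩ := hΥ C (mem_filter.1 hC).1 j (mem_filter.1 hC).2
    exact ⟨w, rfl⟩
  obtain ⟨i₀, hi₀, hfresh⟩ := exists_mem_Icc_forall_pos_ne hHorn PV.index hlt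
  set c := blockedAssignment I (vLabels Υ j) i₀ j
  have hc : evalCNF Υ c := by
    intro C hC
    by_cases hfree : ∀ k, .v k ∉ C.pos ∪ C.neg
    · exact (gFun_iff_forall_vFree hΥ hrep c).1 (gFun_blockedAssignment j hi₀ hU) C hC hfree
    obtain ⟨k, hk⟩ := not_forall_not.1 hfree
    obtain ⟨w, hw, rfl⟩ := hΥ C hC k hk
    refine Clause.eval_pureHorn_iff.2 fun hck => ?_
    obtain rfl : k = j := by simpa [c, blockedAssignment] using hck
    have hwi := hfresh _ (mem_filter.2 ⟨hC, hk⟩) w (mem_singleton_self w)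
    cases w with
    | u ℓ =>
      simp only [c, blockedAssignment, decide_eq_true_iff]
      exact mem_filter.2 ⟨mem_univ _, hC⟩
    | e x y i => simpa [c, blockedAssignment, PV.index] using Or.inl hwi
    | el x y b i => simpa [c, blockedAssignment, PV.index] using Or.inl hwi
    | v m => exact hw.elim
  have hall : ∀ ℓ, ℓ ∈ vLabels Υ j := fun ℓ => by
    simpa [c, blockedAssignment] using
      ((hFun_iff I d t c).1 ((hrep c).1 hc)).2 j ℓ hj (by simp [c, blockedAssignment])
  obtain ⟨f, g, hfg⟩ := hfeas
  exact hU (eq_univ_of_forall hall ▸ LabelCover.coversAll_univ hfg)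

theorem vClauses_eq_image_clauseE (hΥ : IsVShaped I d Υ) (hPH : IsPureHornCNF Υ)
    (hrep : Represents Υ (hFun I d t)) (hmin : IsClauseMinimum (hFun I d t) Υ)
    (hfeas : ∃ f g, I.IsTotalCover f g) {j : ℕ} (hj : j ∈ Icc 1 t)
    (hd : d = 1 + Fintype.card X * Fintype.card A + Fintype.card Y * Fintype.card B) :
    vClauses Υ j = (vLabels Υ j).image (clauseE j) := by
  have hcov := coversAll_vLabels hΥ hrep hfeas hj (card_vClauses_lt hΥ hPH hrep hmin hfeas hj hd)
  have hsub : (vLabels Υ j).image (clauseE j) ⊆ vClauses Υ j := by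
    intro C hC
    obtain ⟨ℓ, hℓ, rfl⟩ := mem_image.1 hC
    exact mem_filter.2 ⟨(mem_filter.1 hℓ).2, by simp [clauseE]⟩
  refine (eq_of_subset_of_card_le hsub ?_).symm
  rw [card_image_of_injective _ (clauseE_injective j)]
  exact card_vClauses_le hΥ hPH hrep hmin hj hcov

end MinimalRepresentation

theorem min_rep_vj_clause_shape_general
    {X Y A B : Type*} [Fintype X] [Fintype Y] [Fintype A] [Fintype B]
    [DecidableEq X] [DecidableEq Y] [DecidableEq A] [DecidableEq B]
    (I : LabelCover X Y A B) (d t : ℕ)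
    (hd : d = 1 + Fintype.card X * Fintype.card A + Fintype.card Y * Fintype.card B)
    (hfeas : ∃ f g, I.IsTotalCover f g)
    (Υ : Finset (Clause (PV X Y A B)))
    (hPH : IsPureHornCNF Υ)
    (hprime : ∀ C ∈ Υ, PrimeImplicate (hFun I d t) C)
    (hrep : Represents Υ (hFun I d t))
    (hmin : ∀ Υ' : Finset (Clause (PV X Y A B)), IsPureHornCNF Υ' →
      Represents Υ' (hFun I d t) → Υ.card ≤ Υ'.card) :
    ∀ C ∈ Υ, ∀ j ∈ Finset.Icc 1 t, PV.v j ∈ C.pos ∪ C.neg →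
      ∃ ℓ : Lab X Y A B, C = ⟨{PV.u ℓ}, {PV.v j}⟩ := by
  intro C hC j hj hvj
  have hΥ : IsVShaped I d Υ := fun C hC k hk => (hprime C hC).eq_of_v_mem hfeas (hPH C hC).2 hk
  have hCj : C ∈ (vLabels Υ j).image (clauseE j) := by
    rw [← vClauses_eq_image_clauseE hΥ hPH hrep hmin hfeas hj hd]
    exact mem_filter.2 ⟨hC, hvj⟩
  obtain ⟨ℓ, -, rfl⟩ := mem_image.1 hCj
  exact ⟨ℓ, rfl⟩

/-- With `d = 1 + rλ + sλ′`, in any clause minimum prime pure Horn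
CNF representation `Υ` of the canonical function `h`, every clause whose variable set
contains some `v(j)`, `j ∈ [t]`, has the form `v(j) → u(ℓ)` for a label
`ℓ ∈ L ∪ L′`. -/
theorem min_rep_vj_clause_shape
    {X Y A B : Type*} [Fintype X] [Fintype Y] [Fintype A] [Fintype B]
    [DecidableEq X] [DecidableEq Y] [DecidableEq A] [DecidableEq B]
    [Nonempty X] [Nonempty Y]
    (I : LabelCover X Y A B) (d t : ℕ) (ht : 1 ≤ t)
    (hd : d = 1 + Fintype.card X * Fintype.card A + Fintype.card Y * Fintype.card B)
    (hnoIsoX : ∀ x : X, ∃ y, (x, y) ∈ I.E)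
    (hnoIsoY : ∀ y : Y, ∃ x, (x, y) ∈ I.E)
    (hfeas : ∃ f g, I.IsTotalCover f g)
    (Υ : Finset (Clause (PV X Y A B)))
    (hPH : IsPureHornCNF Υ)
    (hprime : ∀ C ∈ Υ, PrimeImplicate (hFun I d t) C)
    (hrep : Represents Υ (hFun I d t))
    (hmin : ∀ Υ' : Finset (Clause (PV X Y A B)), IsPureHornCNF Υ' →
      Represents Υ' (hFun I d t) → Υ.card ≤ Υ'.card) :
    ∀ C ∈ Υ, ∀ j ∈ Finset.Icc 1 t, PV.v j ∈ C.pos ∪ C.neg →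
      ∃ ℓ : Lab X Y A B, C = ⟨{PV.u ℓ}, {PV.v j}⟩ :=
  min_rep_vj_clause_shape_general I d t hd hfeas Υ hPH hprime hrep hmin
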